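/- The algebra of gl(1|1)-module endomorphisms of V^{⊗k} has dimension (2(k−1) choose k−1), and is isomorphic as a ℂ-algebra to the planar rook algebra ℂP_{k-1}, which is the direct sum over ℓ = 0,...,k−1 of full matrix algebras of size (k−1 choose ℓ). -/

import Mathlib

noncomputable section

/-- `V^{⊗k}` for the two-dimensional module `V = ℂx ⊕ ℂy`, realized as functions on
words `w : Fin k → Bool` (`false` = `x` (even), `true` = `y` (odd)). -/
abbrev TensorV (k : ℕ) : Type := (Fin k → Bool) → ℂ

/-- The sign `(-1)^{#odd factors strictly before position i}` in the graded Leibniz rule. -/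
def glSgn {k : ℕ} (w : Fin k → Bool) (i : Fin k) : ℂ :=
  (-1 : ℂ) ^ (Finset.univ.filter (fun j => j < i ∧ w j = true)).card

/-- The action of `e ∈ gl(1|1)` on `V^{⊗k}` (graded Leibniz rule, `e·y = x`, `e·x = 0`). -/
def Eop (k : ℕ) : TensorV k →ₗ[ℂ] TensorV k :=
  LinearMap.pi fun w =>
    ∑ i ∈ Finset.univ.filter (fun i => w i = false),
      glSgn w i • LinearMap.proj (R := ℂ) (φ := fun _ => ℂ) (Function.update w i true)

/-- The action of `f ∈ gl(1|1)` on `V^{⊗k}` (graded Leibniz rule, `f·x = y`, `f·y = 0`). -/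
def Fop (k : ℕ) : TensorV k →ₗ[ℂ] TensorV k :=
  LinearMap.pi fun w =>
    ∑ i ∈ Finset.univ.filter (fun i => w i = true),
      glSgn w i • LinearMap.proj (R := ℂ) (φ := fun _ => ℂ) (Function.update w i false)

/-- The action of `h₁ ∈ gl(1|1)` on `V^{⊗k}`: a word is scaled by its number of `x`'s. -/
def H1op (k : ℕ) : TensorV k →ₗ[ℂ] TensorV k :=
  LinearMap.pi fun w =>
    ((Finset.univ.filter (fun i => w i = false)).card : ℂ) •
      LinearMap.proj (R := ℂ) (φ := fun _ => ℂ) w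

/-- The action of `h₂ ∈ gl(1|1)` on `V^{⊗k}`: a word is scaled by its number of `y`'s. -/
def H2op (k : ℕ) : TensorV k →ₗ[ℂ] TensorV k :=
  LinearMap.pi fun w =>
    ((Finset.univ.filter (fun i => w i = true)).card : ℂ) •
      LinearMap.proj (R := ℂ) (φ := fun _ => ℂ) w

/-- The standard basis vector of `V^{⊗k}` indexed by the word `w`. -/
def bv {k : ℕ} (w : Fin k → Bool) : TensorV k := fun w' => if w' = w then 1 else 0

/-- The word of `y ⊗ u_s ∈ V^{⊗(n+1)}`, where `u_s = u₁⊗⋯⊗u_n` has `u_i = x`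
iff `i ∈ s`. -/
def wordOf {n : ℕ} (s : Finset (Fin n)) : Fin (n + 1) → Bool :=
  Fin.cons true (fun j => if j ∈ s then false else true)

/-- The highest weight vector `v_s = e · (y ⊗ u_s) ∈ V^{⊗(n+1)}`. -/
def vStd {n : ℕ} (s : Finset (Fin n)) : TensorV (n + 1) := Eop (n + 1) (bv (wordOf s))

end

/-- The algebra of `gl(1|1)`-endomorphisms of `V^{⊗k}` (`k = n+1`), i.e. the
centralizer of the operators `e, f, h₁, h₂` in `End(V^{⊗k})`. -/
noncomputable def glCentralizer (n : ℕ) : Subalgebra ℂ (Module.End ℂ (TensorV (n + 1))) :=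
  Subalgebra.centralizer ℂ
    {Eop (n + 1), Fop (n + 1), H1op (n + 1), H2op (n + 1)}

/-!
The highest weight vectors `v_s = e · (y ⊗ u_s)`, `s ⊆ {1, …, n}`, together with the `f · v_s` form
a basis of `V^{⊗(n+1)}`: `e² = 0`, `f² = 0` and `ef + fe = n + 1` give `e v_s = 0`, `f f v_s = 0`
and `e f v_s = (n + 1) v_s`, while evaluating at the words `x ⊗ u_t` gives `v_s(x ⊗ u_t) = δ_{st}`.
In this basis `e = (n + 1) E₁₂ ⊗ 1`, `f = E₂₁ ⊗ 1`, `h₁ = 1 ⊗ diag(|s|) + E₁₁ ⊗ 1` and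
`h₂ = n + 1 - h₁`. A matrix commuting with `E₁₂ ⊗ 1` and `E₂₁ ⊗ 1` is of the form `1 ⊗ Y`, and
`1 ⊗ Y` commutes with `1 ⊗ diag(|s|)` iff `Y` preserves `|s|`, i.e. `Y` is block diagonal with
blocks of sizes `(n choose ℓ)`. So the centralizer is `⊕_ℓ M_{(n choose ℓ)}(ℂ)`, of dimension
`∑_ℓ (n choose ℓ)² = (2n choose n)`.
-/

open Finset Function Matrix
open scoped Kronecker

theorem Finset.sum_sum_erase_eq_zero_of_antisymm {α M : Type*} [DecidableEq α]
    [AddCommGroup M] [IsAddTorsionFree M] (s : Finset α) (f : α → α → M)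
    (h : ∀ i ∈ s, ∀ j ∈ s, i ≠ j → f j i = -f i j) :
    ∑ i ∈ s, ∑ j ∈ s.erase i, f i j = 0 := by
  have hswap : ∑ i ∈ s, ∑ j ∈ s.erase i, f i j = ∑ j ∈ s, ∑ i ∈ s.erase j, f i j :=
    sum_comm' fun i j => by simp only [mem_erase]; tauto
  have hneg : ∑ i ∈ s, ∑ j ∈ s.erase i, f i j = -∑ i ∈ s, ∑ j ∈ s.erase i, f i j := by
    conv_lhs => rw [hswap]
    rw [← sum_neg_distrib]
    refine sum_congr rfl fun j hj => ?_
    rw [← sum_neg_distrib]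
    exact sum_congr rfl fun i hi => h j hj i (mem_of_mem_erase hi) (ne_of_mem_erase hi).symm
  exact self_eq_neg.mp hneg

theorem Finset.filter_update_self {α β : Type*} [Fintype α] [DecidableEq α] [DecidableEq β]
    (w : α → β) (i : α) (b : β) :
    univ.filter (fun x => update w i b x = b) = insert i (univ.filter (fun x => w x = b)) := by
  ext x
  by_cases hx : x = i <;> simp [hx]

theorem Finset.filter_update_of_ne {α β : Type*} [Fintype α] [DecidableEq α] [DecidableEq β]
    (w : α → β) (i : α) {b c : β} (h : c ≠ b) :
    univ.filter (fun x => update w i c x = b) = (univ.filter (fun x => w x = b)).erase i := by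
  ext x
  by_cases hx : x = i <;> simp [hx, h]

theorem linearIndependent_cond_of_map {ι R M : Type*} [Fintype ι] [Ring R] [AddCommGroup M]
    [Module R M] {v w : ι → M} (f : Module.End R M)
    (hv : LinearIndependent R v) (hfv : ∀ i, f (v i) = 0) (hfw : ∀ i, f (w i) = v i) :
    LinearIndependent R (fun q : Bool × ι => cond q.1 (w q.2) (v q.2)) := by
  rw [Fintype.linearIndependent_iff]
  intro g hg
  simp only [Fintype.sum_prod_type, Fintype.sum_bool, cond_true, cond_false] at hg
  have htrue : ∀ i, g (true, i) = 0 := Fintype.linearIndependent_iff.mp hv _ <| by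
    simpa [hfv, hfw] using congrArg f hg
  have hfalse : ∀ i, g (false, i) = 0 := Fintype.linearIndependent_iff.mp hv _ <| by
    simpa [htrue] using hg
  rintro ⟨_ | _, i⟩
  exacts [hfalse i, htrue i]

theorem Subalgebra.centralizer_smul_add_mul {R A : Type*} [Field R] [Ring A] [Algebra R A]
    {c : R} (hc : c ≠ 0) (a b d : A) :
    Subalgebra.centralizer R {c • a, b, d + a * b} = Subalgebra.centralizer R {a, b, d} := by
  ext x
  simp only [Subalgebra.mem_centralizer_iff, Set.mem_insert_iff, Set.mem_singleton_iff,
    forall_eq_or_imp, forall_eq]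
  constructor
  · rintro ⟨ha, hb, hd⟩
    have ha' : Commute a x := by simpa [smul_smul, hc] using Commute.smul_left ha c⁻¹
    exact ⟨ha', hb, by simpa using (Commute.sub_left hd (Commute.mul_left ha' hb)).eq⟩
  · rintro ⟨ha, hb, hd⟩
    exact ⟨(Commute.smul_left ha c).eq, hb, (Commute.add_left hd (Commute.mul_left ha hb)).eq⟩

theorem Subalgebra.map_centralizer {R A B : Type*} [CommSemiring R] [Semiring A] [Semiring B]
    [Algebra R A] [Algebra R B] (e : A ≃ₐ[R] B) (s : Set A) :
    (Subalgebra.centralizer R s).map (e : A →ₐ[R] B) = Subalgebra.centralizer R (e '' s) := by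
  ext x
  simp only [Subalgebra.mem_map, Subalgebra.mem_centralizer_iff, Set.forall_mem_image]
  constructor
  · rintro ⟨y, hy, rfl⟩ a ha
    simp [← map_mul, hy a ha]
  · intro hx
    refine ⟨e.symm x, fun a ha => e.injective ?_, e.apply_symm_apply x⟩
    simpa using hx ha

namespace Matrix

variable {R : Type*} [CommRing R]

section Kronecker

theorem submatrix_one_kronecker {l ι : Type*} [DecidableEq l] (a : l) (B : Matrix ι ι R) :
    (1 ⊗ₖ B : Matrix (l × ι) (l × ι) R).submatrix (Prod.mk a) (Prod.mk a) = B := by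
  ext i j
  simp

variable (l : Type*) {ι : Type*} [Fintype l] [DecidableEq l] [Fintype ι] [DecidableEq ι]

def oneKroneckerAlgHom : Matrix ι ι R →ₐ[R] Matrix (l × ι) (l × ι) R where
  toFun B := 1 ⊗ₖ B
  map_one' := one_kronecker_one
  map_mul' A B := by rw [← mul_kronecker_mul, one_mul]
  map_zero' := kronecker_zero _
  map_add' := kronecker_add _
  commutes' r := by simp [Algebra.algebraMap_eq_smul_one, kronecker_smul]

variable {l}

@[simp]
theorem oneKroneckerAlgHom_apply (B : Matrix ι ι R) :
    oneKroneckerAlgHom l B = (1 ⊗ₖ B : Matrix (l × ι) (l × ι) R) := rfl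

theorem oneKroneckerAlgHom_injective [Nonempty l] :
    Injective (oneKroneckerAlgHom (R := R) l (ι := ι)) := fun A B h => by
  obtain ⟨a⟩ := ‹Nonempty l›
  rw [← submatrix_one_kronecker a A, ← submatrix_one_kronecker a B]
  exact congrArg (·.submatrix (Prod.mk a) (Prod.mk a)) h

theorem commute_kronecker_one_one_kronecker (A : Matrix l l R) (B : Matrix ι ι R) :
    Commute (A ⊗ₖ 1) (1 ⊗ₖ B) := by
  rw [Commute, SemiconjBy, ← mul_kronecker_mul, ← mul_kronecker_mul]
  simp

theorem eq_one_kronecker_of_commute {X : Matrix (Bool × ι) (Bool × ι) R}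
    (hE : Commute (single false true 1 ⊗ₖ 1) X) (hF : Commute (single true false 1 ⊗ₖ 1) X) :
    X = 1 ⊗ₖ X.submatrix (Prod.mk false) (Prod.mk false) := by
  have entry : ∀ {A : Matrix (Bool × ι) (Bool × ι) R}, Commute A X → ∀ p q,
      (A * X) p q = (X * A) p q := fun h p q => congrFun (congrFun h.eq p) q
  ext ⟨b, i⟩ ⟨c, j⟩
  have hoff₁ : X (true, i) (false, j) = 0 := by
    simpa [mul_apply, Fintype.sum_prod_type, single_apply, one_apply] using
      (entry hE (true, i) (true, j)).symm
  have hoff₂ : X (false, i) (true, j) = 0 := by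
    simpa [mul_apply, Fintype.sum_prod_type, single_apply, one_apply] using
      (entry hF (false, i) (false, j)).symm
  have hdiag : X (true, i) (true, j) = X (false, i) (false, j) := by
    simpa [mul_apply, Fintype.sum_prod_type, single_apply, one_apply] using
      entry hE (false, i) (true, j)
  cases b <;> cases c <;> simp [hoff₁, hoff₂, hdiag]

end Kronecker

theorem diagonal_commute_iff [NoZeroDivisors R] {ι : Type*} [Fintype ι] [DecidableEq ι]
    {w : ι → R} {X : Matrix ι ι R} :
    Commute (diagonal w) X ↔ ∀ i j, w i ≠ w j → X i j = 0 := by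
  simp only [Commute, SemiconjBy, ← Matrix.ext_iff, diagonal_mul, mul_diagonal]
  refine forall₂_congr fun i j => ?_
  rw [mul_comm (X i j), ← sub_eq_zero, ← sub_mul, mul_eq_zero, sub_eq_zero, or_iff_not_imp_left]

section BlockDiagonal

theorem blockDiagonal'_blockDiag'_of_apply_eq_zero {κ : Type*} [DecidableEq κ] {m : κ → Type*}
    {Y : Matrix (Σ k, m k) (Σ k, m k) R} (h : ∀ i j, i.1 ≠ j.1 → Y i j = 0) :
    blockDiagonal' (blockDiag' Y) = Y := by
  ext ⟨k, i⟩ ⟨k', j⟩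
  by_cases hk : k = k'
  · subst hk
    simp [blockDiagonal'_apply_eq, blockDiag'_apply]
  · rw [blockDiagonal'_apply_ne _ _ _ hk, h _ _ hk]

variable {κ : Type*} [Fintype κ] [DecidableEq κ] {m : κ → Type*} [∀ k, Fintype (m k)]
  [∀ k, DecidableEq (m k)]

variable (R m) in
def blockDiagonal'AlgHom : (∀ k, Matrix (m k) (m k) R) →ₐ[R] Matrix (Σ k, m k) (Σ k, m k) R :=
  { blockDiagonal'RingHom m R with
    commutes' := fun r => by simp [Algebra.algebraMap_eq_smul_one] }

@[simp]
theorem blockDiagonal'AlgHom_apply (M : ∀ k, Matrix (m k) (m k) R) :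
    blockDiagonal'AlgHom R m M = blockDiagonal' M := rfl

theorem centralizer_eq_range_oneKroneckerAlgHom_comp_blockDiagonal'AlgHom [NoZeroDivisors R]
    {c : κ → R} (hc : Injective c) :
    Subalgebra.centralizer R {single false true 1 ⊗ₖ 1, single true false 1 ⊗ₖ 1,
        1 ⊗ₖ diagonal (fun p : Σ k, m k => c p.1)} =
      ((oneKroneckerAlgHom Bool).comp (blockDiagonal'AlgHom R m)).range := by
  ext X
  simp only [Subalgebra.mem_centralizer_iff, Set.mem_insert_iff, Set.mem_singleton_iff,
    forall_eq_or_imp, forall_eq, AlgHom.mem_range, AlgHom.comp_apply, oneKroneckerAlgHom_apply,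
    blockDiagonal'AlgHom_apply]
  constructor
  · rintro ⟨hE, hF, hD⟩
    have hX := eq_one_kronecker_of_commute hE hF
    set Y := X.submatrix (Prod.mk false) (Prod.mk false)
    have hY : Commute (diagonal fun p : Σ k, m k => c p.1) Y := by
      apply oneKroneckerAlgHom_injective (l := Bool)
      rw [hX] at hD
      simpa only [map_mul, oneKroneckerAlgHom_apply] using hD
    refine ⟨blockDiag' Y, ?_⟩
    rw [blockDiagonal'_blockDiag'_of_apply_eq_zero fun i j hij =>
      diagonal_commute_iff.mp hY i j (hc.ne hij), hX]
  · rintro ⟨M, rfl⟩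
    have hM : Commute (diagonal fun p : Σ k, m k => c p.1) (blockDiagonal' M) :=
      diagonal_commute_iff.mpr fun i j hij => blockDiagonal'_apply_ne _ _ _ fun h => hij (h ▸ rfl)
    exact ⟨commute_kronecker_one_one_kronecker _ _, commute_kronecker_one_one_kronecker _ _,
      hM.map (oneKroneckerAlgHom Bool)⟩

end BlockDiagonal

end Matrix

section Operators

variable {k : ℕ}

theorem glSgn_update_of_le (w : Fin k → Bool) {i j : Fin k} (h : j ≤ i) (b : Bool) :
    glSgn (update w i b) j = glSgn w j := by
  unfold glSgn
  congr 2
  refine filter_congr fun x _ => ?_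
  constructor <;> rintro ⟨hx, hw⟩ <;>
    exact ⟨hx, by rwa [update_of_ne (hx.trans_le h).ne] at *⟩

theorem glSgn_update_of_lt (w : Fin k → Bool) {i j : Fin k} (h : i < j) {b : Bool}
    (hb : w i ≠ b) : glSgn (update w i b) j = -glSgn w j := by
  have raise : ∀ w' : Fin k → Bool, w' i = false →
      glSgn (update w' i true) j = -glSgn w' j := by
    intro w' hw'
    have hset : univ.filter (fun x => x < j ∧ update w' i true x = true)
        = insert i (univ.filter (fun x => x < j ∧ w' x = true)) := by
      ext x
      by_cases hx : x = i
      · subst hx; simp [h]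
      · simp [hx]
    rw [glSgn, glSgn, hset, card_insert_of_notMem (by simp [hw']), pow_succ, mul_neg_one]
  cases b
  · have hw : w i = true := by simpa using hb
    have := raise (update w i false) (update_self i false w)
    rw [update_idem, update_eq_self_iff.mpr hw.symm] at this
    rw [this, neg_neg]
  · exact raise w (by simpa using hb)

theorem glSgn_mul_glSgn_update (w : Fin k → Bool) {i j : Fin k} (hij : i ≠ j) {b c : Bool}
    (hi : w i ≠ b) (hj : w j ≠ c) :
    glSgn w j * glSgn (update w j c) i = -(glSgn w i * glSgn (update w i b) j) := by
  rcases hij.lt_or_gt with h | h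
  · rw [glSgn_update_of_le w h.le, glSgn_update_of_lt w h hi]; ring
  · rw [glSgn_update_of_lt w h hj, glSgn_update_of_le w h.le]; ring

theorem glSgn_mul_self (w : Fin k → Bool) (i : Fin k) : glSgn w i * glSgn w i = 1 := by
  rw [glSgn, ← pow_add, Even.neg_one_pow ⟨_, rfl⟩]

def flipOp (k : ℕ) (b : Bool) : Module.End ℂ (TensorV k) :=
  LinearMap.pi fun w => ∑ i ∈ univ.filter (fun i => w i = b),
    glSgn w i • LinearMap.proj (R := ℂ) (φ := fun _ => ℂ) (update w i (!b))

theorem Eop_eq_flipOp : Eop k = flipOp k false := rfl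

theorem Fop_eq_flipOp : Fop k = flipOp k true := rfl

theorem flipOp_apply (b : Bool) (φ : TensorV k) (w : Fin k → Bool) :
    flipOp k b φ w = ∑ i ∈ univ.filter (fun i => w i = b), glSgn w i * φ (update w i (!b)) := by
  rw [flipOp, LinearMap.pi_apply]
  simp

theorem flipOp_mul_self (b : Bool) : flipOp k b * flipOp k b = 0 := by
  refine LinearMap.ext fun φ => funext fun w => ?_
  simp only [Module.End.mul_apply, flipOp_apply, filter_update_of_ne _ _ (Bool.not_ne_self b),
    mul_sum, LinearMap.zero_apply, Pi.zero_apply]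
  refine sum_sum_erase_eq_zero_of_antisymm _ _ fun i hi j hj hij => ?_
  simp only [mem_filter, mem_univ, true_and] at hi hj
  rw [update_comm hij.symm, ← mul_assoc, ← mul_assoc,
    glSgn_mul_glSgn_update w hij (b := !b) (c := !b) (by simp [hi]) (by simp [hj]),
    neg_mul]

theorem flipOp_mul_flipOp_not_apply (b : Bool) (φ : TensorV k) (w : Fin k → Bool) :
    (flipOp k b * flipOp k (!b)) φ w = #(univ.filter (fun i => w i = b)) * φ w +
      ∑ i ∈ univ.filter (fun i => w i = b), ∑ j ∈ univ.filter (fun j => w j = !b),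
        glSgn w i * glSgn (update w i (!b)) j * φ (update (update w i (!b)) j b) := by
  simp only [Module.End.mul_apply, flipOp_apply, filter_update_self, Bool.not_not]
  rw [card_eq_sum_ones, Nat.cast_sum, sum_mul, ← sum_add_distrib]
  refine sum_congr rfl fun i hi => ?_
  simp only [mem_filter, mem_univ, true_and] at hi
  rw [sum_insert (by simp [hi]), mul_add, mul_sum, glSgn_update_of_le _ le_rfl, update_idem,
    update_eq_self_iff.mpr hi.symm, ← mul_assoc, glSgn_mul_self]
  simp only [Nat.cast_one, one_mul, mul_assoc]

theorem card_filter_eq_add_card_filter_eq_not (w : Fin k → Bool) (b : Bool) :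
    #(univ.filter (fun i => w i = b)) + #(univ.filter (fun i => w i = !b)) = k := by
  simpa [Bool.eq_not] using card_filter_add_card_filter_not (s := univ) (fun i => w i = b)

theorem flipOp_anticomm (b : Bool) :
    flipOp k b * flipOp k (!b) + flipOp k (!b) * flipOp k b = (k : ℂ) • 1 := by
  refine LinearMap.ext fun φ => funext fun w => ?_
  have hnot := flipOp_mul_flipOp_not_apply (!b) φ w
  rw [Bool.not_not, sum_comm] at hnot
  rw [LinearMap.add_apply, Pi.add_apply, flipOp_mul_flipOp_not_apply, hnot]
  have hcross : ∀ i ∈ univ.filter (fun i => w i = b), ∀ j ∈ univ.filter (fun j => w j = !b),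
      glSgn w i * glSgn (update w i (!b)) j * φ (update (update w i (!b)) j b) +
        glSgn w j * glSgn (update w j b) i * φ (update (update w j b) i (!b)) = 0 := by
    intro i hi j hj
    simp only [mem_filter, mem_univ, true_and] at hi hj
    have hij : i ≠ j := by rintro rfl; simp [hi] at hj
    rw [update_comm hij.symm, glSgn_mul_glSgn_update w hij (b := !b) (c := b) (by simp [hi])
      (by simp [hj])]
    ring
  have hcard := congrArg (Nat.cast (R := ℂ)) (card_filter_eq_add_card_filter_eq_not w b)
  push_cast at hcard
  simp only [LinearMap.smul_apply, Module.End.one_apply, Pi.smul_apply, smul_eq_mul]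
  have hcancel := sum_eq_zero fun i hi => sum_add_distrib.symm.trans (sum_eq_zero (hcross i hi))
  rw [sum_add_distrib] at hcancel
  linear_combination hcancel + φ w * hcard

theorem Eop_mul_self : Eop k * Eop k = 0 := flipOp_mul_self false

theorem Fop_mul_self : Fop k * Fop k = 0 := flipOp_mul_self true

theorem Eop_mul_Fop_add_Fop_mul_Eop : Eop k * Fop k + Fop k * Eop k = (k : ℂ) • 1 :=
  flipOp_anticomm false

theorem H1op_apply (φ : TensorV k) (w : Fin k → Bool) :
    H1op k φ w = #(univ.filter (fun i => w i = false)) * φ w := by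
  simp [H1op]

theorem H1op_mul_Eop : H1op k * Eop k = Eop k * H1op k + Eop k := by
  refine LinearMap.ext fun φ => funext fun w => ?_
  simp only [Module.End.mul_apply, LinearMap.add_apply, Pi.add_apply, H1op_apply, Eop_eq_flipOp,
    flipOp_apply, Bool.not_false, mul_sum, ← sum_add_distrib]
  refine sum_congr rfl fun i hi => ?_
  rw [filter_update_of_ne _ _ (by decide), card_erase_of_mem hi,
    Nat.cast_sub (card_pos.mpr ⟨i, hi⟩)]
  ring

theorem H1op_mul_Fop : H1op k * Fop k = Fop k * H1op k - Fop k := by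
  refine LinearMap.ext fun φ => funext fun w => ?_
  simp only [Module.End.mul_apply, LinearMap.sub_apply, Pi.sub_apply, H1op_apply, Fop_eq_flipOp,
    flipOp_apply, Bool.not_true, mul_sum, ← sum_sub_distrib]
  refine sum_congr rfl fun i hi => ?_
  rw [filter_update_self, card_insert_of_notMem (by simp_all)]
  push_cast
  ring

theorem H2op_apply (φ : TensorV k) (w : Fin k → Bool) :
    H2op k φ w = #(univ.filter (fun i => w i = true)) * φ w := by
  simp [H2op]

theorem H1op_add_H2op : H1op k + H2op k = (k : ℂ) • 1 := by
  refine LinearMap.ext fun φ => funext fun w => ?_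
  have hcard := card_filter_eq_add_card_filter_eq_not w false
  rw [Bool.not_false] at hcard
  simp only [LinearMap.add_apply, Pi.add_apply, H1op_apply, H2op_apply, LinearMap.smul_apply,
    Module.End.one_apply, Pi.smul_apply, smul_eq_mul, ← add_mul]
  rw [← Nat.cast_add, hcard]

theorem H1op_bv (w : Fin k → Bool) :
    H1op k (bv w) = (#(univ.filter (fun i => w i = false)) : ℂ) • bv w := by
  funext w'
  by_cases h : w' = w <;> simp [H1op_apply, bv, h]

end Operators

section HighestWeightVectors

variable {n : ℕ}

/-- The word of `x ⊗ u_t`. -/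
def lowWord (t : Finset (Fin n)) : Fin (n + 1) → Bool := update (wordOf t) 0 false

theorem card_filter_wordOf_eq_false (s : Finset (Fin n)) :
    #(univ.filter (fun i => wordOf s i = false)) = #s := by
  rw [card_filter, Fin.sum_univ_succ]
  simp [wordOf]

theorem Eop_vStd (s : Finset (Fin n)) : Eop (n + 1) (vStd s) = 0 :=
  LinearMap.congr_fun Eop_mul_self _

theorem Fop_Fop_vStd (s : Finset (Fin n)) : Fop (n + 1) (Fop (n + 1) (vStd s)) = 0 :=
  LinearMap.congr_fun Fop_mul_self _

theorem Eop_Fop_vStd (s : Finset (Fin n)) :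
    Eop (n + 1) (Fop (n + 1) (vStd s)) = ((n : ℂ) + 1) • vStd s := by
  have h := LinearMap.congr_fun (Eop_mul_Fop_add_Fop_mul_Eop (k := n + 1)) (vStd s)
  simpa [Eop_vStd] using h

theorem H1op_vStd (s : Finset (Fin n)) :
    H1op (n + 1) (vStd s) = ((#s : ℂ) + 1) • vStd s := by
  have h := LinearMap.congr_fun (H1op_mul_Eop (k := n + 1)) (bv (wordOf s))
  simp only [Module.End.mul_apply, LinearMap.add_apply, H1op_bv, card_filter_wordOf_eq_false,
    map_smul] at h
  rw [vStd, h, add_smul, one_smul]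

theorem H1op_Fop_vStd (s : Finset (Fin n)) :
    H1op (n + 1) (Fop (n + 1) (vStd s)) = (#s : ℂ) • Fop (n + 1) (vStd s) := by
  have h := LinearMap.congr_fun (H1op_mul_Fop (k := n + 1)) (vStd s)
  simp only [Module.End.mul_apply, LinearMap.sub_apply, H1op_vStd, map_smul] at h
  rw [h, add_smul, one_smul, add_sub_cancel_right]

theorem wordOf_injective : Injective (wordOf (n := n)) := by
  intro s t h
  ext j
  simpa [wordOf] using congrFun h j.succ

theorem vStd_apply_lowWord (s t : Finset (Fin n)) :
    vStd s (lowWord t) = if s = t then 1 else 0 := by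
  have hlow : lowWord t 0 = false := update_self _ _ _
  have hword : ∀ u : Finset (Fin n), wordOf u 0 = true := fun _ => rfl
  rw [vStd, Eop_eq_flipOp, flipOp_apply, sum_eq_single_of_mem 0 (by simp [hlow])]
  · have hsgn : glSgn (lowWord t) 0 = 1 := by simp [glSgn]
    rw [hsgn, one_mul, Bool.not_false, lowWord, update_idem,
      update_eq_self_iff.mpr (hword t).symm, bv]
    simp only [wordOf_injective.eq_iff, eq_comm]
  · intro i _ hi
    have hne : update (lowWord t) i true ≠ wordOf s := fun h => by
      simpa [update_of_ne (Ne.symm hi), hlow, hword] using congrFun h 0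
    simp [bv, hne]

theorem linearIndependent_vStd : LinearIndependent ℂ (vStd (n := n)) := by
  refine LinearIndependent.of_comp (LinearMap.funLeft ℂ ℂ lowWord) ?_
  convert (Pi.basisFun ℂ (Finset (Fin n))).linearIndependent
  ext s t
  simp [vStd_apply_lowWord, Pi.single_apply, eq_comm]

end HighestWeightVectors

section Basis

variable (n : ℕ)

def cardFin (s : Finset (Fin n)) : Fin (n + 1) :=
  ⟨#s, Nat.lt_succ_of_le ((card_le_univ s).trans_eq (Fintype.card_fin n))⟩

theorem card_fiber_cardFin (ℓ : Fin (n + 1)) :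
    Fintype.card {s // cardFin n s = ℓ} = n.choose ℓ := by
  rw [Fintype.card_congr (Equiv.subtypeEquivRight (q := fun s => #s = ℓ.val)
    fun s => Fin.ext_iff)]
  simp

abbrev ChooseIndex : Type := Σ ℓ : Fin (n + 1), Fin (n.choose ℓ)

/-- The subsets of `Fin n`, listed by cardinality. -/
noncomputable def sigmaChooseEquiv : ChooseIndex n ≃ Finset (Fin n) :=
  (Equiv.sigmaCongrRight fun ℓ =>
    (Fintype.equivFinOfCardEq (card_fiber_cardFin n ℓ)).symm).trans
    (Equiv.sigmaFiberEquiv (cardFin n))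

variable {n}

theorem card_sigmaChooseEquiv (p : ChooseIndex n) :
    #(sigmaChooseEquiv n p) = p.1 :=
  congrArg Fin.val ((Fintype.equivFinOfCardEq (card_fiber_cardFin n p.1)).symm p.2).2

variable (n)

theorem linearIndependent_vStd_Fop_vStd :
    LinearIndependent ℂ (fun q : Bool × ChooseIndex n =>
      cond q.1 (Fop (n + 1) (vStd (sigmaChooseEquiv n q.2))) (vStd (sigmaChooseEquiv n q.2))) := by
  have hn : (n : ℂ) + 1 ≠ 0 := Nat.cast_add_one_ne_zero n
  have hv : LinearIndependent ℂ fun p => vStd (sigmaChooseEquiv n p) :=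
    linearIndependent_vStd.comp _ (sigmaChooseEquiv n).injective
  have hli := linearIndependent_cond_of_map
    (w := fun p => Fop (n + 1) (vStd (sigmaChooseEquiv n p))) (((n : ℂ) + 1)⁻¹ • Eop (n + 1)) hv
    (fun _ => by simp [Eop_vStd]) (fun _ => by simp [Eop_Fop_vStd, smul_smul, hn])
  exact hli

/-- The basis `{v_s, f·v_s}` of `V^{⊗(n+1)}`, the subsets `s` listed by cardinality. -/
noncomputable def tensorBasis : Module.Basis (Bool × ChooseIndex n) ℂ (TensorV (n + 1)) :=
  basisOfLinearIndependentOfCardEqFinrank' _ (linearIndependent_vStd_Fop_vStd n) <| by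
    simp [Module.finrank_fintype_fun_eq_card, Fintype.card_congr (sigmaChooseEquiv n), pow_succ,
      mul_comm]

variable {n}

theorem tensorBasis_false (p : ChooseIndex n) :
    tensorBasis n (false, p) = vStd (sigmaChooseEquiv n p) := by
  simp [tensorBasis]

theorem tensorBasis_true (p : ChooseIndex n) :
    tensorBasis n (true, p) = Fop (n + 1) (vStd (sigmaChooseEquiv n p)) := by
  simp [tensorBasis]

theorem Eop_tensorBasis_false (p : ChooseIndex n) :
    Eop (n + 1) (tensorBasis n (false, p)) = 0 := by
  rw [tensorBasis_false, Eop_vStd]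

theorem Eop_tensorBasis_true (p : ChooseIndex n) :
    Eop (n + 1) (tensorBasis n (true, p)) = ((n : ℂ) + 1) • tensorBasis n (false, p) := by
  rw [tensorBasis_false, tensorBasis_true, Eop_Fop_vStd]

theorem Fop_tensorBasis_false (p : ChooseIndex n) :
    Fop (n + 1) (tensorBasis n (false, p)) = tensorBasis n (true, p) := by
  rw [tensorBasis_false, tensorBasis_true]

theorem Fop_tensorBasis_true (p : ChooseIndex n) :
    Fop (n + 1) (tensorBasis n (true, p)) = 0 := by
  rw [tensorBasis_true, Fop_Fop_vStd]

theorem H1op_tensorBasis_false (p : ChooseIndex n) :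
    H1op (n + 1) (tensorBasis n (false, p)) = ((p.1 : ℂ) + 1) • tensorBasis n (false, p) := by
  rw [tensorBasis_false, H1op_vStd, card_sigmaChooseEquiv]

theorem H1op_tensorBasis_true (p : ChooseIndex n) :
    H1op (n + 1) (tensorBasis n (true, p)) = (p.1 : ℂ) • tensorBasis n (true, p) := by
  rw [tensorBasis_true, H1op_Fop_vStd, card_sigmaChooseEquiv]

end Basis

section Centralizer

variable (n : ℕ)

theorem toMatrixAlgEquiv_Eop :
    LinearMap.toMatrixAlgEquiv (tensorBasis n) (Eop (n + 1)) =
      ((n : ℂ) + 1) • (single false true 1 ⊗ₖ 1) := by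
  ext ⟨b, p⟩ ⟨c, q⟩
  cases c <;> simp [LinearMap.toMatrixAlgEquiv_apply, Eop_tensorBasis_false, Eop_tensorBasis_true,
    Finsupp.single_eq_pi_single, Pi.single_apply, Matrix.single_apply, one_apply]
  split_ifs <;> simp_all

theorem toMatrixAlgEquiv_Fop :
    LinearMap.toMatrixAlgEquiv (tensorBasis n) (Fop (n + 1)) = single true false 1 ⊗ₖ 1 := by
  ext ⟨b, p⟩ ⟨c, q⟩
  cases c <;> simp [LinearMap.toMatrixAlgEquiv_apply, Fop_tensorBasis_false, Fop_tensorBasis_true,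
    Finsupp.single_eq_pi_single, Pi.single_apply, Matrix.single_apply, one_apply]
  split_ifs <;> simp_all

theorem toMatrixAlgEquiv_H1op :
    LinearMap.toMatrixAlgEquiv (tensorBasis n) (H1op (n + 1)) =
      1 ⊗ₖ diagonal (fun p : ChooseIndex n => (p.1 : ℂ)) +
        (single false true 1 ⊗ₖ 1) * (single true false 1 ⊗ₖ 1) := by
  rw [← mul_kronecker_mul, single_mul_single_same, one_mul]
  ext ⟨b, p⟩ ⟨c, q⟩
  cases c <;> simp [LinearMap.toMatrixAlgEquiv_apply, H1op_tensorBasis_false,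
    H1op_tensorBasis_true, Finsupp.single_eq_pi_single, Pi.single_apply, Matrix.single_apply,
    one_apply, diagonal_apply]
  all_goals split_ifs <;> simp_all

theorem glCentralizer_eq_centralizer_Eop_Fop_H1op :
    glCentralizer n = Subalgebra.centralizer ℂ {Eop (n + 1), Fop (n + 1), H1op (n + 1)} := by
  have hH2 : H2op (n + 1) = ((n + 1 : ℕ) : ℂ) • 1 - H1op (n + 1) :=
    eq_sub_of_add_eq' H1op_add_H2op
  ext X
  simp only [glCentralizer, Subalgebra.mem_centralizer_iff, Set.mem_insert_iff,
    Set.mem_singleton_iff, forall_eq_or_imp, forall_eq]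
  refine ⟨fun ⟨hE, hF, hH1, _⟩ => ⟨hE, hF, hH1⟩, fun ⟨hE, hF, hH1⟩ => ⟨hE, hF, hH1, ?_⟩⟩
  rw [hH2]
  exact Commute.sub_left ((Commute.one_left X).smul_left _) hH1

noncomputable abbrev blockAlgHom :
    ((ℓ : Fin (n + 1)) → Matrix (Fin (n.choose ℓ)) (Fin (n.choose ℓ)) ℂ) →ₐ[ℂ]
      Matrix (Bool × ChooseIndex n) (Bool × ChooseIndex n) ℂ :=
  (oneKroneckerAlgHom Bool).comp (blockDiagonal'AlgHom ℂ _)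

theorem blockAlgHom_injective : Injective (blockAlgHom n) := fun _ _ h =>
  blockDiagonal'_injective (oneKroneckerAlgHom_injective h)

theorem map_glCentralizer :
    (glCentralizer n).map (LinearMap.toMatrixAlgEquiv (tensorBasis n) : _ →ₐ[ℂ] _) =
      (blockAlgHom n).range := by
  rw [glCentralizer_eq_centralizer_Eop_Fop_H1op, Subalgebra.map_centralizer]
  simp only [Set.image_insert_eq, Set.image_singleton, toMatrixAlgEquiv_Eop, toMatrixAlgEquiv_Fop,
    toMatrixAlgEquiv_H1op]
  rw [Subalgebra.centralizer_smul_add_mul (Nat.cast_add_one_ne_zero n)]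
  exact centralizer_eq_range_oneKroneckerAlgHom_comp_blockDiagonal'AlgHom
    (c := fun ℓ : Fin (n + 1) => ((ℓ : ℕ) : ℂ)) (m := fun ℓ : Fin (n + 1) => Fin (n.choose ℓ))
    fun _ _ h => Fin.ext (Nat.cast_injective h)

end Centralizer

/-- `End_{gl(1|1)}(V^{⊗k})` (`k = n+1`) has dimension `(2(k-1) choose k-1)` and is
isomorphic as a `ℂ`-algebra to the planar rook algebra `ℂP_{k-1}`, i.e., to the
direct sum over `ℓ = 0,…,k-1` of full matrix algebras of size `(k-1 choose ℓ)`. -/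
theorem glCentralizer_eq_planar_rook_algebra (n : ℕ) :
    Module.finrank ℂ (glCentralizer n) = (2 * n).choose n ∧
    Nonempty ((glCentralizer n) ≃ₐ[ℂ]
      ((ℓ : Fin (n + 1)) → Matrix (Fin (n.choose ℓ.val)) (Fin (n.choose ℓ.val)) ℂ)) := by
  have e : glCentralizer n ≃ₐ[ℂ]
      ((ℓ : Fin (n + 1)) → Matrix (Fin (n.choose ℓ.val)) (Fin (n.choose ℓ.val)) ℂ) :=
    ((LinearMap.toMatrixAlgEquiv (tensorBasis n)).subalgebraMap (glCentralizer n)).trans <|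
      (Subalgebra.equivOfEq _ _ (map_glCentralizer n)).trans <|
        (AlgEquiv.ofInjective _ (blockAlgHom_injective n)).symm
  refine ⟨?_, ⟨e⟩⟩
  rw [e.toLinearEquiv.finrank_eq, Module.finrank_pi_fintype, ← Nat.sum_range_choose_sq,
    ← Fin.sum_univ_eq_sum_range]
  simp [Module.finrank_matrix, sq]
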